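/- If a 0-1 matrix A admits a 1D voter-candidate interval explanation, then its rows and columns can be permuted (by increasing left endpoints of associated intervals) so that every 0-entry of A can be labeled L or R such that: every entry labeled L has only 0-entries, all labeled L, to its right in the same row; and every entry labeled R has only 0-entries, all labeled R, below it in the same column. -/

import Mathlib

/-- `A` admits a 1D voter-candidate interval explanation. -/
def IsVCI {n m : ℕ} (A : Fin n → Fin m → Bool) : Prop :=
  ∃ (vl vr : Fin n → ℝ) (cl cr : Fin m → ℝ),
    (∀ i, vl i ≤ vr i) ∧ (∀ j, cl j ≤ cr j) ∧
    ∀ i j, A i j = true ↔ (Set.Icc (vl i) (vr i) ∩ Set.Icc (cl j) (cr j)).Nonempty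

/-! Sort voters and candidates by left endpoint. A `0`-entry `(i, c)` means the intervals
`I_i` and `I_c` are disjoint, so one lies entirely to the left of the other: label it `L` when
`I_i` lies left of `I_c`, and `R` otherwise. Candidates further right in the order start even
later, so they stay disjoint from `I_i` on the same side; voters further down start even later,
so they stay to the right of `I_c`. The label `L` is encoded as `true`. -/

open Set

theorem Set.Icc_inter_Icc_nonempty_iff {α : Type*} [LinearOrder α] {a b c d : α}
    (hab : a ≤ b) (hcd : c ≤ d) : (Icc a b ∩ Icc c d).Nonempty ↔ a ≤ d ∧ c ≤ b := by
  rw [Icc_inter_Icc, nonempty_Icc, sup_le_iff, le_inf_iff, le_inf_iff]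
  tauto

section IntervalModel

variable {ι κ α : Type*} [Preorder ι] [Preorder κ] [LinearOrder α]
  {A : ι → κ → Bool} {vl vr : ι → α} {cl cr : κ → α}

omit [Preorder ι] [Preorder κ] in
theorem eq_false_iff_of_interval_model (hv : ∀ i, vl i ≤ vr i) (hc : ∀ j, cl j ≤ cr j)
    (hA : ∀ i j, A i j = true ↔ (Icc (vl i) (vr i) ∩ Icc (cl j) (cr j)).Nonempty) (i : ι) (j : κ) :
    A i j = false ↔ vr i < cl j ∨ cr j < vl i := by
  rw [← Bool.not_eq_true, hA, Icc_inter_Icc_nonempty_iff (hv i) (hc j)]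
  grind

theorem exists_LR_labeling_of_monotone (hv : ∀ i, vl i ≤ vr i) (hc : ∀ j, cl j ≤ cr j)
    (hA : ∀ i j, A i j = true ↔ (Icc (vl i) (vr i) ∩ Icc (cl j) (cr j)).Nonempty)
    (hvl : Monotone vl) (hcl : Monotone cl) :
    ∃ lab : ι → κ → Bool,
      (∀ i c, A i c = false → lab i c = true →
        ∀ c', c ≤ c' → A i c' = false ∧ lab i c' = true) ∧
      (∀ i c, A i c = false → lab i c = false →
        ∀ i', i ≤ i' → A i' c = false ∧ lab i' c = false) := by
  have hA0 := eq_false_iff_of_interval_model hv hc hA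
  refine ⟨fun i c => decide (vr i < cl c), ?_, ?_⟩
  · intro i c _ hL c' hcc'
    have hleft : vr i < cl c' := (of_decide_eq_true hL).trans_le (hcl hcc')
    exact ⟨(hA0 i c').2 (Or.inl hleft), decide_eq_true hleft⟩
  · intro i c h0 hR i' hii'
    have hright : cr c < vl i' :=
      (((hA0 i c).1 h0).resolve_left (of_decide_eq_false hR)).trans_le (hvl hii')
    refine ⟨(hA0 i' c).2 (Or.inr hright), decide_eq_false ?_⟩
    exact not_lt.2 ((hc c).trans (hright.le.trans (hv i')))

end IntervalModel

/-- If `A` is VCI, then after permuting rows and columns, every `0`-entry can be labeled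
`L` (encoded `true`) or `R` (encoded `false`) so that every `L`-labeled entry has only
`0`-entries, all labeled `L`, to its right in its row, and every `R`-labeled entry has only
`0`-entries, all labeled `R`, below it in its column. -/
theorem vci_LR_labeling {n m : ℕ} (A : Fin n → Fin m → Bool) (hVCI : IsVCI A) :
    ∃ (ρ : Fin n ≃ Fin n) (κ : Fin m ≃ Fin m) (lab : Fin n → Fin m → Bool),
      (∀ i c, A (ρ i) (κ c) = false → lab i c = true →
        ∀ c', c < c' → A (ρ i) (κ c') = false ∧ lab i c' = true) ∧
      (∀ i c, A (ρ i) (κ c) = false → lab i c = false →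
        ∀ i', i < i' → A (ρ i') (κ c) = false ∧ lab i' c = false) := by
  obtain ⟨vl, vr, cl, cr, hv, hc, hA⟩ := hVCI
  obtain ⟨lab, hL, hR⟩ :=
    exists_LR_labeling_of_monotone (A := fun i c => A (Tuple.sort vl i) (Tuple.sort cl c))
    (fun i => hv _) (fun j => hc _) (fun i j => hA _ _)
    (Tuple.monotone_sort vl) (Tuple.monotone_sort cl)
  exact ⟨Tuple.sort vl, Tuple.sort cl, lab,
    fun i c h0 hl c' hcc' => hL i c h0 hl c' hcc'.le,
    fun i c h0 hl i' hii' => hR i c h0 hl i' hii'.le⟩
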